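/- Let i : B → S be an injective ring homomorphism. For each I ∈ I^l_B(S), the composite Γ(I) = (1 ⊗ m^r_I) ∘ ((m^l_I)^{-1} ⊗ 1) : S ⊗_B S → S ⊗_B I ⊗_B S → S ⊗_B S is a B-coring endomorphism of the Sweedler coring S ⊗_B S, and the assignment I ↦ Γ(I) is a homomorphism of monoids Γ : I^l_B(S) → End_{B-cor}(S ⊗_B S). -/

import Mathlib

open scoped TensorProduct

set_option linter.unusedSectionVars false
set_option linter.unusedVariables false

noncomputable section

namespace Gro

variable (B : Type) [Ring B] (M N : Type) [AddCommGroup M] [AddCommGroup N]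
variable (ρ : B → M →+ M) (lam : B → N →+ N)

/-- The subgroup of relations for the balanced tensor product over `B`. -/
def trel : AddSubgroup (M ⊗[ℤ] N) :=
  AddSubgroup.closure {x | ∃ (m : M) (b : B) (n : N), x = (ρ b m) ⊗ₜ[ℤ] n - m ⊗ₜ[ℤ] (lam b n)}

/-- The balanced tensor product `M ⊗_B N` of a right `B`-module and a left `B`-module,
realized as a quotient of the tensor product of abelian groups. -/
def TP := (M ⊗[ℤ] N) ⧸ trel B M N ρ lam

instance : AddCommGroup (TP B M N ρ lam) := QuotientAddGroup.Quotient.addCommGroup _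

variable {B M N}

/-- The canonical bilinear map into the balanced tensor product. -/
def tp (m : M) (n : N) : TP B M N ρ lam := QuotientAddGroup.mk (m ⊗ₜ[ℤ] n)

theorem tp_rel (b : B) (m : M) (n : N) : tp ρ lam (ρ b m) n = tp ρ lam m (lam b n) := by
  unfold tp
  exact QuotientAddGroup.eq_iff_sub_mem.mpr (AddSubgroup.subset_closure ⟨m, b, n, rfl⟩)

theorem tp_add_left (m m' : M) (n : N) :
    tp ρ lam (m + m') n = tp ρ lam m n + tp ρ lam m' n := by
  unfold tp
  exact (congrArg (QuotientAddGroup.mk (s := trel B M N ρ lam))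
    (TensorProduct.add_tmul m m' n)).trans (QuotientAddGroup.mk_add _ _ _)

theorem tp_add_right (m : M) (n n' : N) :
    tp ρ lam m (n + n') = tp ρ lam m n + tp ρ lam m n' := by
  unfold tp
  exact (congrArg (QuotientAddGroup.mk (s := trel B M N ρ lam))
    (TensorProduct.tmul_add m n n')).trans (QuotientAddGroup.mk_add _ _ _)

theorem tp_zero_left (n : N) : tp ρ lam (0 : M) n = 0 := by
  unfold tp; rw [TensorProduct.zero_tmul]; rfl

theorem tp_zero_right (m : M) : tp ρ lam m (0 : N) = 0 := by
  unfold tp; rw [TensorProduct.tmul_zero]; rfl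

/-- Lift a balanced biadditive map to the balanced tensor product. -/
def liftTP {P : Type} [AddCommGroup P] (f : M →+ N →+ P)
    (hf : ∀ (m : M) (b : B) (n : N), f (ρ b m) n = f m (lam b n)) :
    TP B M N ρ lam →+ P :=
  QuotientAddGroup.lift _ (TensorProduct.liftAddHom f (fun z m n => by
      simp [map_zsmul, AddMonoidHom.map_zsmul]))
    (by
      refine (AddSubgroup.closure_le _).2 ?_
      rintro x ⟨m, b, n, rfl⟩
      simp only [SetLike.mem_coe, AddMonoidHom.mem_ker, map_sub,
        TensorProduct.liftAddHom_tmul, hf m b n, sub_self])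

@[simp] theorem liftTP_tp {P : Type} [AddCommGroup P] (f : M →+ N →+ P) (hf) (m : M) (n : N) :
    liftTP ρ lam f hf (tp ρ lam m n) = f m n := rfl

/-- The canonical map as a biadditive map. -/
def tpHom : M →+ N →+ TP B M N ρ lam where
  toFun m := AddMonoidHom.mk' (fun n => tp ρ lam m n) (fun n n' => tp_add_right ρ lam m n n')
  map_zero' := by ext n; exact tp_zero_left ρ lam n
  map_add' m m' := by ext n; exact tp_add_left ρ lam m m' n

@[simp] theorem tpHom_apply (m : M) (n : N) : tpHom ρ lam m n = tp ρ lam m n := rfl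

@[elab_as_elim]
theorem tp_induction {p : TP B M N ρ lam → Prop}
    (tmul : ∀ m n, p (tp ρ lam m n)) (zero : p 0)
    (add : ∀ x y, p x → p y → p (x + y)) (neg : ∀ x, p x → p (-x)) (x : TP B M N ρ lam) : p x := by
  obtain ⟨y, rfl⟩ := QuotientAddGroup.mk_surjective x
  induction y using TensorProduct.induction_on with
  | zero => exact zero
  | tmul m n => exact tmul m n
  | add a b ha hb => rw [QuotientAddGroup.mk_add]; exact add _ _ ha hb

theorem hom_ext {P : Type} [AddCommGroup P] {φ ψ : TP B M N ρ lam →+ P}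
    (h : ∀ m n, φ (tp ρ lam m n) = ψ (tp ρ lam m n)) : φ = ψ := by
  ext x
  induction x using tp_induction ρ lam with
  | tmul m n => exact h m n
  | zero => simp
  | add a b ha hb => simp [ha, hb]
  | neg a ha => simp [ha]

end Gro
end
namespace Gro

noncomputable section

variable {B S : Type} [Ring B] [Ring S]

/-- Right action of `B` on `S` via `i`. -/
def rAct (i : B →+* S) (b : B) : S →+ S := AddMonoidHom.mulRight (i b)

/-- Left action of `B` on `S` via `i`. -/
def lAct (i : B →+* S) (b : B) : S →+ S := AddMonoidHom.mulLeft (i b)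

/-- The Sweedler coring `S ⊗_B S` of a ring extension `i : B →+* S`. -/
def Sw (i : B →+* S) : Type := TP B S S (rAct i) (lAct i)

instance (i : B →+* S) : AddCommGroup (Sw i) :=
  inferInstanceAs (AddCommGroup (TP B S S (rAct i) (lAct i)))

/-- The element `s ⊗_B t` of the Sweedler coring. -/
def swMk (i : B →+* S) (s t : S) : Sw i := tp (rAct i) (lAct i) s t

theorem swMk_rel (i : B →+* S) (b : B) (s t : S) :
    swMk i (s * i b) t = swMk i s (i b * t) :=
  tp_rel (rAct i) (lAct i) b s t

theorem swMk_add_left (i : B →+* S) (s s' t : S) :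
    swMk i (s + s') t = swMk i s t + swMk i s' t := tp_add_left _ _ _ _ _

theorem swMk_add_right (i : B →+* S) (s t t' : S) :
    swMk i s (t + t') = swMk i s t + swMk i s t' := tp_add_right _ _ _ _ _

/-- The biadditive map `(s, t) ↦ s ⊗_B t`. -/
def swMkHom (i : B →+* S) : S →+ S →+ Sw i := tpHom (rAct i) (lAct i)

/-- The left action of `S` on the Sweedler coring `S ⊗_B S`. -/
def lsmul (i : B →+* S) (s : S) : Sw i →+ Sw i :=
  liftTP (rAct i) (lAct i) ((swMkHom i).comp (AddMonoidHom.mulLeft s))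
    (by
      intro m b n
      simp only [AddMonoidHom.coe_comp, Function.comp_apply, AddMonoidHom.coe_mulLeft, swMkHom,
        tpHom_apply]
      show tp _ _ (s * (m * i b)) n = tp _ _ (s * m) (i b * n)
      rw [← mul_assoc]
      exact tp_rel (rAct i) (lAct i) b (s * m) n)

@[simp] theorem lsmul_swMk (i : B →+* S) (s a b : S) :
    lsmul i s (swMk i a b) = swMk i (s * a) b := rfl

/-- The right action of `S` on the Sweedler coring `S ⊗_B S`. -/
def rsmul (i : B →+* S) (s : S) : Sw i →+ Sw i :=
  liftTP (rAct i) (lAct i)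
    (AddMonoidHom.mk' (fun a => (swMkHom i a).comp (AddMonoidHom.mulRight s)) (by
      intro a a'
      ext t
      simp only [swMkHom, AddMonoidHom.coe_comp, Function.comp_apply, tpHom_apply,
        AddMonoidHom.add_apply, AddMonoidHom.coe_mulRight]
      exact tp_add_left _ _ _ _ _))
    (by
      intro m b n
      show tp _ _ (m * i b) (n * s) = tp _ _ m ((i b * n) * s)
      rw [mul_assoc]
      exact tp_rel (rAct i) (lAct i) b m (n * s))

@[simp] theorem rsmul_swMk (i : B →+* S) (s a b : S) :
    rsmul i s (swMk i a b) = swMk i a (b * s) := rfl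

/-- The counit of the Sweedler coring, induced by multiplication. -/
def swCounit (i : B →+* S) : Sw i →+ S :=
  liftTP (rAct i) (lAct i) AddMonoidHom.mul (by
    intro m b n
    simp only [AddMonoidHom.mul_apply]
    show m * i b * n = m * (i b * n)
    rw [mul_assoc])

@[simp] theorem swCounit_swMk (i : B →+* S) (a b : S) : swCounit i (swMk i a b) = a * b := rfl

/-- The cotensor square `C ⊗_S C` of the Sweedler coring `C = S ⊗_B S`. -/
def T2 (i : B →+* S) : Type := TP S (Sw i) (Sw i) (rsmul i) (lsmul i)

instance (i : B →+* S) : AddCommGroup (T2 i) :=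
  inferInstanceAs (AddCommGroup (TP S (Sw i) (Sw i) (rsmul i) (lsmul i)))

/-- The element `x ⊗_S y` of `C ⊗_S C`. -/
def t2Mk (i : B →+* S) (x y : Sw i) : T2 i := tp (rsmul i) (lsmul i) x y

/-- The comultiplication of the Sweedler coring: `s ⊗_B t ↦ (s ⊗_B 1) ⊗_S (1 ⊗_B t)`. -/
def swComul (i : B →+* S) : Sw i →+ T2 i :=
  liftTP (rAct i) (lAct i)
    (AddMonoidHom.mk'
      (fun s => (tpHom (rsmul i) (lsmul i) (swMk i s 1)).comp (swMkHom i 1)) (by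
        intro s s'
        ext t
        simp only [AddMonoidHom.coe_comp, Function.comp_apply, AddMonoidHom.add_apply,
          tpHom_apply]
        rw [swMk_add_left]
        exact tp_add_left _ _ _ _ _))
    (by
      intro m b n
      show t2Mk i (swMk i (m * i b) 1) (swMk i 1 n) = t2Mk i (swMk i m 1) (swMk i 1 (i b * n))
      have h1 : swMk i (m * i b) 1 = rsmul i (i b) (swMk i m 1) := by
        rw [rsmul_swMk, one_mul, swMk_rel, mul_one]
      have h2 : swMk i 1 (i b * n) = lsmul i (i b) (swMk i 1 n) := by
        rw [lsmul_swMk, mul_one, ← swMk_rel, one_mul]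
      rw [h1, h2]
      exact tp_rel (rsmul i) (lsmul i) (i b) (swMk i m 1) (swMk i 1 n))

@[simp] theorem swComul_swMk (i : B →+* S) (s t : S) :
    swComul i (swMk i s t) = t2Mk i (swMk i s 1) (swMk i 1 t) := rfl

/-- The induced endomorphism `g ⊗_S g` of `C ⊗_S C`, for an `S`-bimodule map `g`. -/
def gg (i : B →+* S) (g : Sw i →+ Sw i)
    (hl : ∀ s x, g (lsmul i s x) = lsmul i s (g x))
    (hr : ∀ s x, g (rsmul i s x) = rsmul i s (g x)) : T2 i →+ T2 i :=
  liftTP (rsmul i) (lsmul i)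
    (AddMonoidHom.mk' (fun c => (tpHom (rsmul i) (lsmul i) (g c)).comp g) (by
      intro c c'
      ext d
      simp [map_add]
      rfl))
    (by
      intro m s n
      show t2Mk i (g (rsmul i s m)) (g n) = t2Mk i (g m) (g (lsmul i s n))
      rw [hr, hl]
      exact tp_rel (rsmul i) (lsmul i) s (g m) (g n))

@[simp] theorem gg_t2Mk (i : B →+* S) (g : Sw i →+ Sw i) (hl hr) (x y : Sw i) :
    gg i g hl hr (t2Mk i x y) = t2Mk i (g x) (g y) := rfl

/-- A coring endomorphism of the Sweedler coring `S ⊗_B S`: an `S`-bimodule map commuting with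
the comultiplication and the counit. -/
def IsCoringEnd (i : B →+* S) (g : Sw i →+ Sw i) : Prop :=
  (∀ x, swCounit i (g x) = swCounit i x) ∧
    ∃ (hl : ∀ s x, g (lsmul i s x) = lsmul i s (g x))
      (hr : ∀ s x, g (rsmul i s x) = rsmul i s (g x)),
      ∀ x, swComul i (g x) = gg i g hl hr (swComul i x)

/-- A coring automorphism of the Sweedler coring. -/
def IsCoringAut (i : B →+* S) (g : Sw i →+ Sw i) : Prop :=
  IsCoringEnd i g ∧ ∃ h : Sw i →+ Sw i, IsCoringEnd i h ∧
    g.comp h = AddMonoidHom.id _ ∧ h.comp g = AddMonoidHom.id _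

end

end Gro
namespace Gro

noncomputable section

variable {B S : Type} [Ring B] [Ring S]

theorem swMk_neg_left (i : B →+* S) (a t : S) : swMk i (-a) t = -swMk i a t :=
  map_neg ((swMkHom i).flip t) a

theorem swMk_neg_right (i : B →+* S) (a t : S) : swMk i a (-t) = -swMk i a t :=
  map_neg (swMkHom i a) t

/-- A `B`-subbimodule of `S` (along the ring homomorphism `i : B →+* S`). -/
structure Sub (i : B →+* S) where
  car : AddSubgroup S
  l : ∀ (b : B) (x : S), x ∈ car → i b * x ∈ car
  r : ∀ (b : B) (x : S), x ∈ car → x * i b ∈ car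

/-- The product of two subbimodules: the additive subgroup generated by products. -/
def mulSub (i : B →+* S) (I J : Sub i) : Sub i where
  car := AddSubgroup.closure {x | ∃ a ∈ I.car, ∃ c ∈ J.car, x = a * c}
  l := by
    intro b x hx
    induction hx using AddSubgroup.closure_induction with
    | mem y hy =>
      obtain ⟨a, ha, c, hc, rfl⟩ := hy
      rw [← mul_assoc]
      exact AddSubgroup.subset_closure ⟨i b * a, I.l b a ha, c, hc, rfl⟩
    | zero => simpa using AddSubgroup.zero_mem _
    | add y z _ _ hy hz => rw [mul_add]; exact AddSubgroup.add_mem _ hy hz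
    | neg y _ hy => rw [mul_neg]; exact AddSubgroup.neg_mem _ hy
  r := by
    intro b x hx
    induction hx using AddSubgroup.closure_induction with
    | mem y hy =>
      obtain ⟨a, ha, c, hc, rfl⟩ := hy
      rw [mul_assoc]
      exact AddSubgroup.subset_closure ⟨a, ha, c * i b, J.r b c hc, rfl⟩
    | zero => simpa using AddSubgroup.zero_mem _
    | add y z _ _ hy hz => rw [add_mul]; exact AddSubgroup.add_mem _ hy hz
    | neg y _ hy => rw [neg_mul]; exact AddSubgroup.neg_mem _ hy

/-- The unit subbimodule `i(B) ⊆ S`. -/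
def oneSub (i : B →+* S) : Sub i where
  car := i.toAddMonoidHom.range
  l := by rintro b _ ⟨c, rfl⟩; exact ⟨b * c, by simp⟩
  r := by rintro b _ ⟨c, rfl⟩; exact ⟨c * b, by simp⟩

/-- An invertible subbimodule. -/
def IsInvSub (i : B →+* S) (I : Sub i) : Prop :=
  ∃ J : Sub i, mulSub i I J = oneSub i ∧ mulSub i J I = oneSub i

/-- The left action of `B` on a subbimodule. -/
def lActSub (i : B →+* S) (I : Sub i) (b : B) : I.car →+ I.car :=
  AddMonoidHom.mk' (fun x => ⟨i b * ↑x, I.l b ↑x x.2⟩) (by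
    intro x y; ext; simp [mul_add])

/-- The tensor product `S ⊗_B I` for a subbimodule `I ⊆ S`. -/
def TI (i : B →+* S) (I : Sub i) : Type := TP B S I.car (rAct i) (lActSub i I)

instance (i : B →+* S) (I : Sub i) : AddCommGroup (TI i I) :=
  inferInstanceAs (AddCommGroup (TP B S I.car (rAct i) (lActSub i I)))

/-- The element `s ⊗_B x` of `S ⊗_B I`. -/
def tiMk (i : B →+* S) (I : Sub i) (s : S) (x : I.car) : TI i I :=
  tp (rAct i) (lActSub i I) s x

/-- The multiplication map `m^l_I : S ⊗_B I → S`. -/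
def mull (i : B →+* S) (I : Sub i) : TI i I →+ S :=
  liftTP (rAct i) (lActSub i I)
    (AddMonoidHom.mk' (fun s => (AddMonoidHom.mulLeft s).comp I.car.subtype) (by
      intro s s'; ext x; simp [add_mul]))
    (by
      intro m b n
      show m * i b * ↑n = m * (i b * ↑n)
      rw [mul_assoc])

@[simp] theorem mull_tiMk (i : B →+* S) (I : Sub i) (s : S) (x : I.car) :
    mull i I (tiMk i I s x) = s * ↑x := rfl

/-- The map `S ⊗_B I → S ⊗_B S` induced by the inclusion `I ⊆ S`. -/
def inclTI (i : B →+* S) (I : Sub i) : TI i I →+ Sw i :=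
  liftTP (rAct i) (lActSub i I)
    (AddMonoidHom.mk' (fun s => (swMkHom i s).comp I.car.subtype) (by
      intro s s'; ext x
      simp only [AddMonoidHom.coe_comp, Function.comp_apply, AddMonoidHom.add_apply, swMkHom,
        tpHom_apply, AddSubgroup.coe_subtype]
      exact tp_add_left _ _ _ _ _))
    (by
      intro m b n
      exact swMk_rel i b m ↑n)

@[simp] theorem inclTI_tiMk (i : B →+* S) (I : Sub i) (s : S) (x : I.car) :
    inclTI i I (tiMk i I s x) = swMk i s ↑x := rfl

/-- The map `S ⊗_B I → S ⊗_B J` induced by an inclusion `I ⊆ J` of subbimodules. -/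
def tiMap (i : B →+* S) (I J : Sub i) (h : I.car ≤ J.car) : TI i I →+ TI i J :=
  liftTP (rAct i) (lActSub i I)
    (AddMonoidHom.mk' (fun s =>
      (tpHom (rAct i) (lActSub i J) s).comp (AddMonoidHom.mk'
        (fun x : I.car => (⟨↑x, h x.2⟩ : J.car)) (by intro x y; rfl))) (by
      intro s s'; ext x
      simp only [AddMonoidHom.coe_comp, Function.comp_apply, AddMonoidHom.mk'_apply,
        AddMonoidHom.add_apply, tpHom_apply]
      exact tp_add_left _ _ _ _ _))
    (by
      intro m b n
      exact tp_rel (rAct i) (lActSub i J) b m ⟨↑n, h n.2⟩)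

/-- The subbimodule `J(g) = {s ∈ S | g(s ⊗ 1) = 1 ⊗ s}` associated to a coring endomorphism. -/
def JSub (i : B →+* S) (g : Sw i →+ Sw i) (hg : IsCoringEnd i g) : Sub i where
  car :=
    { carrier := {s : S | g (swMk i s 1) = swMk i 1 s}
      zero_mem' := by
        have h0 : swMk i (0 : S) 1 = 0 := tp_zero_left _ _ _
        have h0' : swMk i 1 (0 : S) = 0 := tp_zero_right _ _ _
        simp only [Set.mem_setOf_eq, h0, h0', map_zero]
      add_mem' := by
        intro a c ha hc
        simp only [Set.mem_setOf_eq] at *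
        rw [swMk_add_left, map_add, ha, hc, ← swMk_add_right]
      neg_mem' := by
        intro a ha
        simp only [Set.mem_setOf_eq] at *
        rw [swMk_neg_left, map_neg, ha, ← swMk_neg_right] }
  l := by
    intro b x hx
    obtain ⟨-, hl, hr, -⟩ := hg
    show g (swMk i (i b * x) 1) = swMk i 1 (i b * x)
    have h1 : swMk i (i b * x) 1 = lsmul i (i b) (swMk i x 1) := by rw [lsmul_swMk]
    rw [h1, hl, hx, lsmul_swMk, mul_one]
    have h2 := swMk_rel i b 1 x
    rw [one_mul] at h2
    exact h2
  r := by
    intro b x hx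
    obtain ⟨-, hl, hr, -⟩ := hg
    show g (swMk i (x * i b) 1) = swMk i 1 (x * i b)
    have h1 : swMk i (x * i b) 1 = rsmul i (i b) (swMk i x 1) := by
      rw [rsmul_swMk, one_mul, swMk_rel, mul_one]
    rw [h1, hr, hx]
    rfl

/-- The biadditive map underlying `Γ(I)`: `(u ⊗ x, s') ↦ u ⊗ (x s')`. -/
def alphaI (i : B →+* S) (I : Sub i) : TI i I →+ (S →+ Sw i) :=
  liftTP (rAct i) (lActSub i I)
    (AddMonoidHom.mk' (fun u =>
      AddMonoidHom.mk' (fun x : I.car =>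
        AddMonoidHom.mk' (fun t => swMk i u (↑x * t)) (by
          intro t t'; show swMk i u (↑x * (t + t')) = _; rw [mul_add, swMk_add_right])) (by
        intro x y; ext t
        simp only [AddMonoidHom.mk'_apply, AddMonoidHom.add_apply, AddSubgroup.coe_add]
        rw [add_mul, swMk_add_right])) (by
      intro u u'; ext x t
      simp only [AddMonoidHom.mk'_apply, AddMonoidHom.add_apply]
      rw [swMk_add_left]))
    (by
      intro m b n; ext t
      simp only [AddMonoidHom.mk'_apply]
      show swMk i (m * i b) (↑n * t) = swMk i m (↑(lActSub i I b n) * t)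
      rw [swMk_rel]
      congr 1
      show i b * (↑n * t) = (i b * ↑n) * t
      rw [mul_assoc])

@[simp] theorem alphaI_tiMk (i : B →+* S) (I : Sub i) (u : S) (x : I.car) (t : S) :
    alphaI i I (tiMk i I u x) t = swMk i u (↑x * t) := rfl

/-- The right action of `B` on `S ⊗_B I`, through the last factor. -/
def ractTI (i : B →+* S) (I : Sub i) (b : B) : TI i I →+ TI i I :=
  liftTP (rAct i) (lActSub i I)
    (AddMonoidHom.mk' (fun s =>
      AddMonoidHom.mk' (fun x : I.car => tiMk i I s ⟨↑x * i b, I.r b ↑x x.2⟩) (by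
        intro x y
        have hxy : (⟨(↑x + ↑y) * i b, I.r b _ (AddSubgroup.add_mem _ x.2 y.2)⟩ : I.car)
            = ⟨↑x * i b, I.r b ↑x x.2⟩ + ⟨↑y * i b, I.r b ↑y y.2⟩ := by
          ext; simp [add_mul]
        show tiMk i I s ⟨(↑x + ↑y) * i b, _⟩ = _
        rw [hxy]
        exact tp_add_right _ _ _ _ _)) (by
      intro s s'; ext x
      simp only [AddMonoidHom.mk'_apply, AddMonoidHom.add_apply]
      exact tp_add_left _ _ _ _ _))
    (by
      intro m b' n
      show tiMk i I (m * i b') ⟨↑n * i b, _⟩ = tiMk i I m ⟨↑(lActSub i I b' n) * i b, _⟩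
      have := tp_rel (rAct i) (lActSub i I) b' m (⟨↑n * i b, I.r b ↑n n.2⟩ : I.car)
      refine this.trans ?_
      congr 1
      ext
      show i b' * (↑n * i b) = (i b' * ↑n) * i b
      rw [mul_assoc])

theorem mull_ractTI (i : B →+* S) (I : Sub i) (b : B) :
    (mull i I).comp (ractTI i I b) = (AddMonoidHom.mulRight (i b)).comp (mull i I) :=
  hom_ext (rAct i) (lActSub i I) (fun m n => by
    show mull i I (ractTI i I b (tiMk i I m n)) = mull i I (tiMk i I m n) * i b
    show m * (↑n * i b) = (m * ↑n) * i b
    rw [mul_assoc])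

theorem alphaI_ractTI (i : B →+* S) (I : Sub i) (b : B) (z : TI i I) :
    alphaI i I (ractTI i I b z) = (alphaI i I z).comp (AddMonoidHom.mulLeft (i b)) := by
  have h : (alphaI i I).comp (ractTI i I b) =
      (AddMonoidHom.mk' (fun z => (alphaI i I z).comp (AddMonoidHom.mulLeft (i b))) (by
        intro z z'; ext t; simp [map_add])) := by
    refine hom_ext (rAct i) (lActSub i I) (fun m n => ?_)
    ext t
    show swMk i m ((↑n * i b) * t) = swMk i m (↑n * (i b * t))
    rw [mul_assoc]
  exact DFunLike.congr_fun h z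

/-- The coring endomorphism `Γ(I) = (1 ⊗ m^r_I) ∘ ((m^l_I)⁻¹ ⊗ 1)` associated to
`I ∈ I^l_B(S)`. -/
def GammaMap (i : B →+* S) (I : Sub i) (h : Function.Bijective (mull i I)) :
    Sw i →+ Sw i :=
  liftTP (rAct i) (lAct i)
    (AddMonoidHom.mk'
      (fun s => alphaI i I ((AddEquiv.ofBijective (mull i I) h).symm s)) (by
      intro s s'
      show alphaI i I ((AddEquiv.ofBijective (mull i I) h).symm (s + s')) = _
      rw [map_add, map_add]))
    (by
      intro m b n
      show alphaI i I ((AddEquiv.ofBijective (mull i I) h).symm (m * i b)) n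
        = alphaI i I ((AddEquiv.ofBijective (mull i I) h).symm m) (i b * n)
      set e := AddEquiv.ofBijective (mull i I) h with he
      have hsymm : ∀ s, mull i I (e.symm s) = s := fun s => e.apply_symm_apply s
      have e1 : e.symm (m * i b) = ractTI i I b (e.symm m) := by
        apply h.1
        rw [hsymm]
        have := DFunLike.congr_fun (mull_ractTI i I b) (e.symm m)
        simp only [AddMonoidHom.coe_comp, Function.comp_apply, AddMonoidHom.coe_mulRight] at this
        rw [this, hsymm]
      rw [e1, alphaI_ractTI]
      rfl)

end

end Gro

/-!
If `a = Σ uₖ xₖ` with `xₖ ∈ I`, then `Γ(I)(a ⊗ t) = Σ uₖ ⊗ xₖ t`. Since `m^l_I` is onto, `Γ(I)` is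
the unique left `S`-linear endomorphism of `S ⊗_B S` sending `x ⊗ t` to `1 ⊗ x t` for `x ∈ I`; both
`Γ(I) ∘ Γ(J)` and `Γ(IJ)` have this property for `IJ`, and the identity has it for `i(B)`. The
coring axioms are checked on the elements `α(w, t)` with `w ∈ S ⊗_B I`, where `α(u ⊗ x, t) = u ⊗ x t`.
-/

namespace Gro

noncomputable section

theorem hom_ext_apply {B M N P : Type} [Ring B] [AddCommGroup M] [AddCommGroup N]
    [AddCommGroup P] {ρ : B → M →+ M} {lam : B → N →+ N} {φ ψ : TP B M N ρ lam →+ P}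
    (h : ∀ m n, φ (tp ρ lam m n) = ψ (tp ρ lam m n)) (x : TP B M N ρ lam) : φ x = ψ x :=
  DFunLike.congr_fun (hom_ext ρ lam h) x

variable {B S : Type} [Ring B] [Ring S] (i : B →+* S)

theorem swMk_zero_left (t : S) : swMk i 0 t = 0 := tp_zero_left _ _ t

theorem swMk_zero_right (s : S) : swMk i s 0 = 0 := tp_zero_right _ _ s

theorem t2Mk_rsmul (s : S) (x y : Sw i) : t2Mk i (rsmul i s x) y = t2Mk i x (lsmul i s y) :=
  tp_rel (rsmul i) (lsmul i) s x y

section TensorSub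

variable (I : Sub i)

def lsmulTI (s : S) : TI i I →+ TI i I :=
  liftTP (rAct i) (lActSub i I) ((tpHom (rAct i) (lActSub i I)).comp (AddMonoidHom.mulLeft s))
    (fun m b n => by
      show tiMk i I (s * (m * i b)) n = tiMk i I (s * m) (lActSub i I b n)
      rw [← mul_assoc]
      exact tp_rel (rAct i) (lActSub i I) b (s * m) n)

theorem mull_lsmulTI (s : S) (w : TI i I) : mull i I (lsmulTI i I s w) = s * mull i I w :=
  hom_ext_apply (φ := (mull i I).comp (lsmulTI i I s))
    (ψ := (AddMonoidHom.mulLeft s).comp (mull i I))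
    (fun m n => mul_assoc s m n) w

theorem alphaI_lsmulTI (s t : S) (w : TI i I) :
    alphaI i I (lsmulTI i I s w) t = lsmul i s (alphaI i I w t) :=
  hom_ext_apply (φ := ((alphaI i I).flip t).comp (lsmulTI i I s))
    (ψ := (lsmul i s).comp ((alphaI i I).flip t)) (fun _ _ => rfl) w

theorem alphaI_mul_right (s t : S) (w : TI i I) :
    alphaI i I w (t * s) = rsmul i s (alphaI i I w t) :=
  hom_ext_apply (φ := (alphaI i I).flip (t * s))
    (ψ := (rsmul i s).comp ((alphaI i I).flip t))
    (fun u x => congrArg (swMk i u) (mul_assoc _ t s).symm) w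

theorem swCounit_alphaI (t : S) (w : TI i I) :
    swCounit i (alphaI i I w t) = mull i I w * t :=
  hom_ext_apply (φ := (swCounit i).comp ((alphaI i I).flip t))
    (ψ := (AddMonoidHom.mulRight t).comp (mull i I))
    (fun u x => (mul_assoc u x t).symm) w

end TensorSub

variable {i} {I : Sub i} (h : Function.Bijective (mull i I))

theorem gammaMap_swMk_of_mull_eq {w : TI i I} {a : S} (hw : mull i I w = a) (t : S) :
    GammaMap i I h (swMk i a t) = alphaI i I w t := by
  show alphaI i I ((AddEquiv.ofBijective (mull i I) h).symm a) t = _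
  rw [(AddEquiv.ofBijective (mull i I) h).symm_apply_eq.mpr hw.symm]

theorem gammaMap_mul_swMk (u : S) {x : S} (hx : x ∈ I.car) (t : S) :
    GammaMap i I h (swMk i (u * x) t) = swMk i u (x * t) :=
  gammaMap_swMk_of_mull_eq h (w := tiMk i I u ⟨x, hx⟩) rfl t

theorem gammaMap_swMk_of_mem {x : S} (hx : x ∈ I.car) (t : S) :
    GammaMap i I h (swMk i x t) = swMk i 1 (x * t) :=
  gammaMap_swMk_of_mull_eq h (w := tiMk i I 1 ⟨x, hx⟩) (one_mul x) t

theorem gammaMap_lsmul (s : S) (z : Sw i) :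
    GammaMap i I h (lsmul i s z) = lsmul i s (GammaMap i I h z) :=
  hom_ext_apply (φ := (GammaMap i I h).comp (lsmul i s)) (ψ := (lsmul i s).comp (GammaMap i I h))
    (fun a t => by
      show GammaMap i I h (swMk i (s * a) t) = lsmul i s (GammaMap i I h (swMk i a t))
      obtain ⟨w, rfl⟩ := h.2 a
      rw [gammaMap_swMk_of_mull_eq h rfl, gammaMap_swMk_of_mull_eq h (mull_lsmulTI i I s w),
        alphaI_lsmulTI]) z

theorem gammaMap_rsmul (s : S) (z : Sw i) :
    GammaMap i I h (rsmul i s z) = rsmul i s (GammaMap i I h z) :=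
  hom_ext_apply (φ := (GammaMap i I h).comp (rsmul i s)) (ψ := (rsmul i s).comp (GammaMap i I h))
    (fun a t => by
      show GammaMap i I h (swMk i a (t * s)) = rsmul i s (GammaMap i I h (swMk i a t))
      obtain ⟨w, rfl⟩ := h.2 a
      rw [gammaMap_swMk_of_mull_eq h rfl, gammaMap_swMk_of_mull_eq h rfl, alphaI_mul_right]) z

theorem swCounit_gammaMap (z : Sw i) : swCounit i (GammaMap i I h z) = swCounit i z :=
  hom_ext_apply (φ := (swCounit i).comp (GammaMap i I h)) (ψ := swCounit i) (fun a t => by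
    show swCounit i (GammaMap i I h (swMk i a t)) = a * t
    obtain ⟨w, rfl⟩ := h.2 a
    rw [gammaMap_swMk_of_mull_eq h rfl, swCounit_alphaI]) z

theorem swComul_alphaI (t : S) (w : TI i I) :
    swComul i (alphaI i I w t) = t2Mk i (alphaI i I w 1) (GammaMap i I h (swMk i 1 t)) :=
  hom_ext_apply (φ := (swComul i).comp ((alphaI i I).flip t))
    (ψ := ((tpHom (rsmul i) (lsmul i)).flip (GammaMap i I h (swMk i 1 t))).comp
      ((alphaI i I).flip 1))
    -- `x` moves across `⊗_S`, where `x · Γ(1 ⊗ t) = Γ(x ⊗ t) = 1 ⊗ x t`.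
    (fun u x => calc
      swComul i (swMk i u (x * t)) = t2Mk i (swMk i u 1) (swMk i 1 (x * t)) := rfl
      _ = t2Mk i (swMk i u 1) (lsmul i x (GammaMap i I h (swMk i 1 t))) := by
        rw [← gammaMap_lsmul, lsmul_swMk, mul_one, gammaMap_swMk_of_mem h x.2]
      _ = t2Mk i (swMk i u (x * 1)) (GammaMap i I h (swMk i 1 t)) := by
        rw [← t2Mk_rsmul, rsmul_swMk, one_mul, mul_one]) w

theorem swComul_gammaMap (z : Sw i) :
    swComul i (GammaMap i I h z)
      = gg i (GammaMap i I h) (gammaMap_lsmul h) (gammaMap_rsmul h) (swComul i z) :=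
  hom_ext_apply (φ := (swComul i).comp (GammaMap i I h))
    (ψ := (gg i (GammaMap i I h) (gammaMap_lsmul h) (gammaMap_rsmul h)).comp (swComul i))
    (fun a t => by
      show swComul i (GammaMap i I h (swMk i a t))
        = t2Mk i (GammaMap i I h (swMk i a 1)) (GammaMap i I h (swMk i 1 t))
      obtain ⟨w, rfl⟩ := h.2 a
      rw [gammaMap_swMk_of_mull_eq h rfl, gammaMap_swMk_of_mull_eq h rfl, swComul_alphaI h]) z

theorem gammaMap_isCoringEnd : IsCoringEnd i (GammaMap i I h) :=
  ⟨swCounit_gammaMap h, gammaMap_lsmul h, gammaMap_rsmul h, swComul_gammaMap h⟩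

theorem eq_gammaMap_of_swMk (g : Sw i →+ Sw i) (hg : ∀ s z, g (lsmul i s z) = lsmul i s (g z))
    (hgI : ∀ x ∈ I.car, ∀ t, g (swMk i x t) = swMk i 1 (x * t)) : g = GammaMap i I h :=
  hom_ext (rAct i) (lAct i) fun a t => by
    obtain ⟨w, rfl⟩ := h.2 a
    show g (swMk i (mull i I w) t) = GammaMap i I h (swMk i (mull i I w) t)
    rw [gammaMap_swMk_of_mull_eq h rfl]
    refine hom_ext_apply (φ := g.comp (((swMkHom i).flip t).comp (mull i I)))
      (ψ := (alphaI i I).flip t) (fun u x => ?_) w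
    show g (swMk i (u * x) t) = swMk i u (x * t)
    rw [← lsmul_swMk, hg, hgI x x.2, lsmul_swMk, mul_one]

theorem gammaMap_mulSub {I J : Sub i} (hI : Function.Bijective (mull i I))
    (hJ : Function.Bijective (mull i J)) (hIJ : Function.Bijective (mull i (mulSub i I J))) :
    GammaMap i (mulSub i I J) hIJ = (GammaMap i I hI).comp (GammaMap i J hJ) := by
  refine (eq_gammaMap_of_swMk hIJ _ (fun s z => by simp only [AddMonoidHom.comp_apply,
    gammaMap_lsmul]) fun x hx t => ?_).symm
  show GammaMap i I hI (GammaMap i J hJ (swMk i x t)) = swMk i 1 (x * t)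
  induction hx using AddSubgroup.closure_induction with
  | mem y hy =>
    obtain ⟨a, ha, c, hc, rfl⟩ := hy
    rw [gammaMap_mul_swMk hJ a hc, gammaMap_swMk_of_mem hI ha, mul_assoc]
  | zero => rw [swMk_zero_left, map_zero, map_zero, zero_mul, swMk_zero_right]
  | add y z _ _ hy hz => rw [swMk_add_left, map_add, map_add, hy, hz, add_mul, swMk_add_right]
  | neg y _ hy => rw [swMk_neg_left, map_neg, map_neg, hy, neg_mul, swMk_neg_right]

theorem gammaMap_oneSub (h1 : Function.Bijective (mull i (oneSub i))) :
    GammaMap i (oneSub i) h1 = AddMonoidHom.id (Sw i) :=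
  (eq_gammaMap_of_swMk h1 _ (fun _ _ => rfl) fun x ⟨b, hb⟩ t => by
    subst hb
    show swMk i (i b) t = swMk i 1 (i b * t)
    rw [← swMk_rel, one_mul]).symm

end

end Gro

open Gro in
theorem Gamma_is_monoid_hom_general {B S : Type} [Ring B] [Ring S] (i : B →+* S) :
    (∀ (I : Sub i) (h : Function.Bijective (mull i I)), IsCoringEnd i (GammaMap i I h)) ∧
    (∀ (I J K : Sub i) (hI : Function.Bijective (mull i I))
        (hJ : Function.Bijective (mull i J)) (hK : Function.Bijective (mull i K)),
      mulSub i I J = K →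
        GammaMap i K hK = (GammaMap i I hI).comp (GammaMap i J hJ)) ∧
    (∀ h1 : Function.Bijective (mull i (oneSub i)),
      GammaMap i (oneSub i) h1 = AddMonoidHom.id (Sw i)) := by
  refine ⟨fun I h => gammaMap_isCoringEnd h, fun I J K hI hJ hK hIJK => ?_, gammaMap_oneSub⟩
  subst hIJK
  exact gammaMap_mulSub hI hJ hK

open Gro in
/-- For an injective ring extension `i : B → S` and each `I ∈ I^l_B(S)`, the composite
`Γ(I) = (1 ⊗ m^r_I) ∘ ((m^l_I)⁻¹ ⊗ 1)` is a `B`-coring endomorphism of the Sweedler coring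
`S ⊗_B S`, and `I ↦ Γ(I)` is a homomorphism of monoids `I^l_B(S) → End(S ⊗_B S)`. -/
theorem Gamma_is_monoid_hom {B S : Type} [Ring B] [Ring S] (i : B →+* S)
    (hi : Function.Injective i) :
    (∀ (I : Sub i) (h : Function.Bijective (mull i I)), IsCoringEnd i (GammaMap i I h)) ∧
    (∀ (I J K : Sub i) (hI : Function.Bijective (mull i I))
        (hJ : Function.Bijective (mull i J)) (hK : Function.Bijective (mull i K)),
      mulSub i I J = K →
        GammaMap i K hK = (GammaMap i I hI).comp (GammaMap i J hJ)) ∧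
    (∀ h1 : Function.Bijective (mull i (oneSub i)),
      GammaMap i (oneSub i) h1 = AddMonoidHom.id (Sw i)) :=
  Gamma_is_monoid_hom_general i
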